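/- Let q ∈ ℝ and z, β ∈ ℂ with β ≠ 0, z + q ≠ 0 and z − q = (z + q)β⁴. Set R := (z + q)β², Ω := 2(2z² + q²)R, and define Φ : ℝ × ℝ → Matrix (Fin 2) (Fin 2) ℂ by Φ(x,t) := E(β) · diag(exp(−i(Rx + Ωt)), exp(i(Rx + Ωt))). Then R² = z² − q², and for all (x,t) ∈ ℝ², Φ satisfies both equations of the constant-background Lax system: ∂_x Φ(x,t) + i z σ₃ Φ(x,t) = q σ₁ Φ(x,t) and ∂_t Φ(x,t) + 4i z³ σ₃ Φ(x,t) = (4z² q σ₁ − 2i z q² σ₃ + 2q³ σ₁) Φ(x,t). -/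

import Mathlib

open Complex

/-- Pauli matrix σ₁. -/
def pauli1 : Matrix (Fin 2) (Fin 2) ℂ := !![0, 1; 1, 0]

/-- Pauli matrix σ₃. -/
def pauli3 : Matrix (Fin 2) (Fin 2) ℂ := !![1, 0; 0, -1]

/-- The eigenvector matrix `E(β) = (1/2)[[β+β⁻¹, i(β−β⁻¹)],[−i(β−β⁻¹), β+β⁻¹]]`. -/
noncomputable def Emat (β : ℂ) : Matrix (Fin 2) (Fin 2) ℂ :=
  (1 / 2 : ℂ) • !![β + β⁻¹, Complex.I * (β - β⁻¹);
                   -(Complex.I * (β - β⁻¹)), β + β⁻¹]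

/-- The plane-wave solution `Φ(x,t) = E(β)·diag(e^{−i(Rx+Ωt)}, e^{i(Rx+Ωt)})`. -/
noncomputable def PhiPW (β R Ω : ℂ) (x t : ℝ) : Matrix (Fin 2) (Fin 2) ℂ :=
  Emat β * Matrix.diagonal ![Complex.exp (-(Complex.I * (R * x + Ω * t))),
                             Complex.exp (Complex.I * (R * x + Ω * t))]

lemma Phi00 (β R Ω : ℂ) (x t : ℝ) : PhiPW β R Ω x t 0 0
    = (1/2) * (β + β⁻¹) * Complex.exp (-(Complex.I * (R * x + Ω * t))) := by
  simp [PhiPW, Emat, Matrix.mul_diagonal]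

lemma Phi01 (β R Ω : ℂ) (x t : ℝ) : PhiPW β R Ω x t 0 1
    = (1/2) * (Complex.I * (β - β⁻¹)) * Complex.exp (Complex.I * (R * x + Ω * t)) := by
  simp [PhiPW, Emat, Matrix.mul_diagonal]

lemma Phi10 (β R Ω : ℂ) (x t : ℝ) : PhiPW β R Ω x t 1 0
    = (1/2) * (-(Complex.I * (β - β⁻¹))) * Complex.exp (-(Complex.I * (R * x + Ω * t))) := by
  simp [PhiPW, Emat, Matrix.mul_diagonal]

lemma Phi11 (β R Ω : ℂ) (x t : ℝ) : PhiPW β R Ω x t 1 1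
    = (1/2) * (β + β⁻¹) * Complex.exp (Complex.I * (R * x + Ω * t)) := by
  simp [PhiPW, Emat, Matrix.mul_diagonal]

lemma dexp_neg (R Ω : ℂ) (t x : ℝ) :
    HasDerivAt (fun y : ℝ => Complex.exp (-(Complex.I * (R * y + Ω * t))))
      ((-(Complex.I * R)) * Complex.exp (-(Complex.I * (R * x + Ω * t)))) x := by
  have h0 : HasDerivAt (fun y : ℝ => (y : ℂ)) 1 x := Complex.ofRealCLM.hasDerivAt
  have h1 := (((h0.const_mul R).add_const (Ω * (t:ℝ))).const_mul Complex.I).neg.cexp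
  simp only [Pi.neg_apply] at h1
  convert h1 using 1; ring

lemma dexp_pos (R Ω : ℂ) (t x : ℝ) :
    HasDerivAt (fun y : ℝ => Complex.exp (Complex.I * (R * y + Ω * t)))
      ((Complex.I * R) * Complex.exp (Complex.I * (R * x + Ω * t))) x := by
  have h0 : HasDerivAt (fun y : ℝ => (y : ℂ)) 1 x := Complex.ofRealCLM.hasDerivAt
  have h1 := (((h0.const_mul R).add_const (Ω * (t:ℝ))).const_mul Complex.I).cexp
  convert h1 using 1; ring

lemma dexp_neg_t (R Ω : ℂ) (x t : ℝ) :
    HasDerivAt (fun s : ℝ => Complex.exp (-(Complex.I * (R * x + Ω * s))))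
      ((-(Complex.I * Ω)) * Complex.exp (-(Complex.I * (R * x + Ω * t)))) t := by
  have h0 : HasDerivAt (fun s : ℝ => (s : ℂ)) 1 t := Complex.ofRealCLM.hasDerivAt
  have h1 := (((h0.const_mul Ω).const_add (R * (x:ℝ))).const_mul Complex.I).neg.cexp
  simp only [Pi.neg_apply] at h1
  convert h1 using 1; ring

lemma dexp_pos_t (R Ω : ℂ) (x t : ℝ) :
    HasDerivAt (fun s : ℝ => Complex.exp (Complex.I * (R * x + Ω * s)))
      ((Complex.I * Ω) * Complex.exp (Complex.I * (R * x + Ω * t))) t := by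
  have h0 : HasDerivAt (fun s : ℝ => (s : ℂ)) 1 t := Complex.ofRealCLM.hasDerivAt
  have h1 := (((h0.const_mul Ω).const_add (R * (x:ℝ))).const_mul Complex.I).cexp
  convert h1 using 1; ring

/-- With `z − q = (z+q)β⁴`, `R = (z+q)β²`, `Ω = 2(2z²+q²)R`, one has `R² = z² − q²`,
and `Φ(x,t) = E(β)e^{−i(Rx+Ωt)σ₃}` solves both equations of the constant-background
Lax system: `Φ_x + izσ₃Φ = qσ₁Φ` and `Φ_t + 4iz³σ₃Φ = (4z²qσ₁ − 2izq²σ₃ + 2q³σ₁)Φ`. -/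
theorem plane_wave_solves_lax (q : ℝ) (z β : ℂ) (hβ : β ≠ 0)
    (hzq : z + (q : ℂ) ≠ 0) (hβ4 : z - (q : ℂ) = (z + (q : ℂ)) * β ^ 4)
    (R Ω : ℂ) (hR : R = (z + (q : ℂ)) * β ^ 2) (hΩ : Ω = 2 * (2 * z ^ 2 + (q : ℂ) ^ 2) * R) :
    R ^ 2 = z ^ 2 - (q : ℂ) ^ 2 ∧
    ∀ x t : ℝ,
      (∀ i j : Fin 2,
        deriv (fun y : ℝ => PhiPW β R Ω y t i j) x
          + Complex.I * z * ((pauli3 * PhiPW β R Ω x t) i j)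
          = (q : ℂ) * ((pauli1 * PhiPW β R Ω x t) i j)) ∧
      (∀ i j : Fin 2,
        deriv (fun s : ℝ => PhiPW β R Ω x s i j) t
          + 4 * Complex.I * z ^ 3 * ((pauli3 * PhiPW β R Ω x t) i j)
          = ((((4 * z ^ 2 * (q : ℂ)) • pauli1
              - (2 * Complex.I * z * (q : ℂ) ^ 2) • pauli3
              + (2 * (q : ℂ) ^ 3) • pauli1) * PhiPW β R Ω x t) i j)) := by
  -- key scalar identities
  have hI1 : (R - z) * (β + β⁻¹) = (q : ℂ) * (β - β⁻¹) := by
    rw [hR]; field_simp; linear_combination -hβ4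
  have hI2 : (R + z) * (β - β⁻¹) = -((q : ℂ) * (β + β⁻¹)) := by
    rw [hR]; field_simp; linear_combination -hβ4
  refine ⟨by rw [hR]; linear_combination -(z + (q : ℂ)) * hβ4, fun x t => ?_⟩
  set e0 := Complex.exp (-(Complex.I * (R * x + Ω * t))) with he0
  set e1 := Complex.exp (Complex.I * (R * x + Ω * t)) with he1
  constructor
  · intro i j
    fin_cases i <;> fin_cases j <;>
      simp only [pauli1, pauli3, Matrix.mul_apply, Fin.sum_univ_two,
        Matrix.cons_val_zero, Matrix.cons_val_one, Matrix.head_cons, Matrix.head_fin_const,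
        Fin.mk_zero, Fin.mk_one, Fin.isValue, Matrix.of_apply,
        Phi00, Phi01, Phi10, Phi11, ← he0, ← he1]
    · rw [(((dexp_neg R Ω t x).const_mul ((1/2) * (β + β⁻¹)))).deriv, ← he0]
      linear_combination (-(Complex.I * e0)/2) * hI1
    · rw [(((dexp_pos R Ω t x).const_mul ((1/2) * (Complex.I * (β - β⁻¹))))).deriv, ← he1]
      linear_combination (-(e1/2)) * hI2 + ((R+z)*(β-β⁻¹)*e1/2) * Complex.I_sq
    · rw [(((dexp_neg R Ω t x).const_mul ((1/2) * (-(Complex.I * (β - β⁻¹)))))).deriv, ← he0]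
      linear_combination (-(e0/2)) * hI2 + ((R+z)*(β-β⁻¹)*e0/2) * Complex.I_sq
    · rw [(((dexp_pos R Ω t x).const_mul ((1/2) * (β + β⁻¹)))).deriv, ← he1]
      linear_combination ((Complex.I * e1)/2) * hI1
  · intro i j
    fin_cases i <;> fin_cases j <;>
      simp only [pauli1, pauli3, Matrix.mul_apply, Matrix.sub_apply, Matrix.add_apply,
        Matrix.smul_apply, Fin.sum_univ_two, smul_eq_mul,
        Matrix.cons_val_zero, Matrix.cons_val_one, Matrix.head_cons, Matrix.head_fin_const,
        Fin.mk_zero, Fin.mk_one, Fin.isValue, Matrix.of_apply,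
        Phi00, Phi01, Phi10, Phi11, ← he0, ← he1]
    · rw [(((dexp_neg_t R Ω x t).const_mul ((1/2) * (β + β⁻¹)))).deriv, ← he0, hΩ]
      linear_combination (-(Complex.I * e0)/2) * (4*z^2 + 2*(q:ℂ)^2) * hI1
    · rw [(((dexp_pos_t R Ω x t).const_mul ((1/2) * (Complex.I * (β - β⁻¹))))).deriv, ← he1, hΩ]
      linear_combination (-(e1/2)) * (4*z^2 + 2*(q:ℂ)^2) * hI2 + ((4*z^2 + 2*(q:ℂ)^2)*(R+z)*(β-β⁻¹)*e1/2) * Complex.I_sq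
    · rw [(((dexp_neg_t R Ω x t).const_mul ((1/2) * (-(Complex.I * (β - β⁻¹)))))).deriv, ← he0, hΩ]
      linear_combination (-(e0/2)) * (4*z^2 + 2*(q:ℂ)^2) * hI2 + ((4*z^2 + 2*(q:ℂ)^2)*(R+z)*(β-β⁻¹)*e0/2) * Complex.I_sq
    · rw [(((dexp_pos_t R Ω x t).const_mul ((1/2) * (β + β⁻¹)))).deriv, ← he1, hΩ]
      linear_combination ((Complex.I * e1)/2) * (4*z^2 + 2*(q:ℂ)^2) * hI1
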